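/- arXiv:1506.03869 — 4 statements merged into one kernel-verified Lean document; each statement's English description precedes it below -/
import Mathlib

section
/- Assume q is in standard form: q_{2i,2i-1} = q_i, q_{2i-1,2i} = q_i^{-1} for 1 ≤ i ≤ z (2z ≤ d), with q_i a primitive k_i-th root of unity, and all other entries equal to 1. Then the elements ξ_l defined by ξ_{2i-1} = k_i e_{2i-1}, ξ_{2i} = k_i e_{2i} for 1 ≤ i ≤ z, and ξ_l = e_l for l > 2z, form a ℤ-basis of the subgroup Rad(f) of ℤ^d. -/
open Finset

/-- f(n,m) = ∏_{i,j=1}^d q_{ji}^{n_j m_i} -/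
noncomputable def qf {d : ℕ} (q : Fin d → Fin d → ℂˣ) (n m : Fin d → ℤ) : ℂˣ :=
  ∏ p : Fin d × Fin d, q p.2 p.1 ^ (n p.2 * m p.1)

/-- ξ_l : the candidate ℤ-basis vectors of Rad(f) in the standard form case. -/
noncomputable def xiVec (d z : ℕ) (k : Fin z → ℕ) (l : Fin d) : Fin d → ℤ :=
  if h : l.val < 2 * z then
    (k ⟨l.val / 2, by omega⟩ : ℤ) • Pi.single l 1
  else Pi.single l 1

lemma sum_xi_eval {d z : ℕ} (hz : 2 * z ≤ d) (k : Fin z → ℕ) (c : Fin d → ℤ) (j : Fin d) :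
    (∑ l, c l • xiVec d z k l) j =
      c j * (if h : j.val < 2 * z then (k ⟨j.val / 2, by omega⟩ : ℤ) else 1) := by
  rw [Finset.sum_apply, Finset.sum_eq_single j]
  · simp only [Pi.smul_apply, smul_eq_mul, xiVec]
    split <;> simp [Pi.single_apply] <;> ring
  · intro l _ hlj
    simp only [Pi.smul_apply, smul_eq_mul, xiVec]
    split <;> simp [Pi.single_apply, hlj]
  · simp

lemma qf_single {d : ℕ} (q : Fin d → Fin d → ℂˣ) (n : Fin d → ℤ) (b : Fin d) :
    qf q n (Pi.single b 1) = ∏ a, q a b ^ (n a) := by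
  rw [qf, Fintype.prod_prod_type]
  rw [Finset.prod_eq_single b]
  · apply Finset.prod_congr rfl
    intro a _
    simp
  · intro b' _ hb'
    apply Finset.prod_eq_one
    intro a _
    simp [Pi.single_apply, hb']
  · simp

theorem stmt4 {d z : ℕ} (hd : 1 ≤ d) (hz : 2 * z ≤ d)
    (k : Fin z → ℕ) (hk : ∀ i, 0 < k i)
    (ζ : Fin z → ℂˣ) (hζ : ∀ i, IsPrimitiveRoot (ζ i) (k i))
    (q : Fin d → Fin d → ℂˣ)
    (h1 : ∀ i : Fin z, ∀ a b : Fin d,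
      a.val = 2 * i.val + 1 → b.val = 2 * i.val → q a b = ζ i)
    (h2 : ∀ i : Fin z, ∀ a b : Fin d,
      a.val = 2 * i.val → b.val = 2 * i.val + 1 → q a b = (ζ i)⁻¹)
    (h3 : ∀ a b : Fin d,
      (∀ i : Fin z, ¬(a.val = 2 * i.val + 1 ∧ b.val = 2 * i.val) ∧
        ¬(a.val = 2 * i.val ∧ b.val = 2 * i.val + 1)) → q a b = 1) :
    (∀ n : Fin d → ℤ, (∀ m, qf q n m = 1) ↔
        ∃ c : Fin d → ℤ, n = ∑ l, c l • xiVec d z k l) ∧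
    (∀ c : Fin d → ℤ, ∑ l, c l • xiVec d z k l = 0 → c = 0) := by
  -- the diagonal "scaling" factor
  set K : Fin d → ℤ := fun j =>
    if h : j.val < 2 * z then (k ⟨j.val / 2, by omega⟩ : ℤ) else 1 with hKdef
  have hKpos : ∀ j, 0 < K j := by
    intro j
    simp only [hKdef]
    split
    · exact_mod_cast hk _
    · norm_num
  have hsum : ∀ (c : Fin d → ℤ) (j : Fin d), (∑ l, c l • xiVec d z k l) j = c j * K j := by
    intro c j
    exact sum_xi_eval hz k c j
  constructor
  · intro n
    constructor
    · intro hn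
      refine ⟨fun j => n j / K j, ?_⟩
      funext j
      rw [hsum]
      rw [Int.ediv_mul_cancel]
      -- show K j ∣ n j
      by_cases hj : j.val < 2 * z
      · set i : Fin z := ⟨j.val / 2, by omega⟩ with hidef
        simp only [hKdef, dif_pos hj]
        rcases Nat.even_or_odd j.val with he | ho
        · -- j = 2i : use m = e_{2i+1}
          obtain ⟨t, ht⟩ := he
          have hji : j.val = 2 * i.val := by simp [hidef]; omega
          have hiz : 2 * i.val + 1 < d := by omega
          have := hn (Pi.single ⟨2 * i.val + 1, hiz⟩ 1)
          rw [qf_single] at this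
          rw [Finset.prod_eq_single j] at this
          · rw [h2 i j ⟨2 * i.val + 1, hiz⟩ hji rfl] at this
            rw [inv_zpow] at this
            have h1' : (ζ i) ^ (-(n j)) = 1 := by rw [zpow_neg]; exact this
            have := ((hζ i).zpow_eq_one_iff_dvd _).mp h1'
            exact dvd_neg.mp this
          · intro a _ ha
            rw [h3 a ⟨2 * i.val + 1, hiz⟩, one_zpow]
            intro i'
            constructor
            · rintro ⟨ha1, hb1⟩
              simp only [Fin.val_mk] at hb1
              omega
            · rintro ⟨ha1, hb1⟩
              simp only [Fin.val_mk] at hb1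
              have : i'.val = i.val := by omega
              apply ha
              apply Fin.ext
              omega
          · intro hjmem
            exact absurd (Finset.mem_univ j) hjmem
        · -- j = 2i+1 : use m = e_{2i}
          obtain ⟨t, ht⟩ := ho
          have hji : j.val = 2 * i.val + 1 := by simp [hidef]; omega
          have hiz : 2 * i.val < d := by omega
          have := hn (Pi.single ⟨2 * i.val, hiz⟩ 1)
          rw [qf_single] at this
          rw [Finset.prod_eq_single j] at this
          · rw [h1 i j ⟨2 * i.val, hiz⟩ hji rfl] at this
            have := ((hζ i).zpow_eq_one_iff_dvd _).mp this
            exact this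
          · intro a _ ha
            rw [h3 a ⟨2 * i.val, hiz⟩, one_zpow]
            intro i'
            constructor
            · rintro ⟨ha1, hb1⟩
              simp only [Fin.val_mk] at hb1
              have : i'.val = i.val := by omega
              apply ha
              apply Fin.ext
              omega
            · rintro ⟨ha1, hb1⟩
              simp only [Fin.val_mk] at hb1
              omega
          · intro hjmem
            exact absurd (Finset.mem_univ j) hjmem
      · simp only [hKdef, dif_neg hj]
        exact one_dvd _
    · rintro ⟨c, rfl⟩ m
      rw [qf]
      apply Finset.prod_eq_one
      rintro ⟨b, a⟩ -
      simp only
      by_cases hcase : ∃ i : Fin z, (a.val = 2 * i.val + 1 ∧ b.val = 2 * i.val) ∨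
          (a.val = 2 * i.val ∧ b.val = 2 * i.val + 1)
      · obtain ⟨i, hi | hi⟩ := hcase
        · rw [h1 i a b hi.1 hi.2]
          have hna : (∑ l, c l • xiVec d z k l) a = c a * (k i : ℤ) := by
            rw [hsum]
            congr 1
            have haz : a.val < 2 * z := by have := i.isLt; omega
            simp only [hKdef, dif_pos haz]
            have hieq : (⟨a.val / 2, by omega⟩ : Fin z) = i := by
              apply Fin.ext
              simp only [Fin.val_mk]
              omega
            rw [hieq]
          rw [hna]
          have : c a * (k i : ℤ) * m b = (k i : ℤ) * (c a * m b) := by ring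
          rw [this, zpow_mul, zpow_natCast, (hζ i).pow_eq_one, one_zpow]
        · rw [h2 i a b hi.1 hi.2]
          have hna : (∑ l, c l • xiVec d z k l) a = c a * (k i : ℤ) := by
            rw [hsum]
            congr 1
            have haz : a.val < 2 * z := by have := i.isLt; omega
            simp only [hKdef, dif_pos haz]
            have hieq : (⟨a.val / 2, by omega⟩ : Fin z) = i := by
              apply Fin.ext
              simp only [Fin.val_mk]
              omega
            rw [hieq]
          rw [hna]
          have : c a * (k i : ℤ) * m b = (k i : ℤ) * (c a * m b) := by ring
          rw [this, zpow_mul, zpow_natCast, inv_pow, (hζ i).pow_eq_one, inv_one, one_zpow]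
      · rw [h3 a b, one_zpow]
        intro i'
        exact ⟨fun hco => hcase ⟨i', Or.inl hco⟩, fun hco => hcase ⟨i', Or.inr hco⟩⟩
  · intro c hc
    funext j
    have := congrFun hc j
    rw [hsum] at this
    have hK := hKpos j
    simp only [Pi.zero_apply] at this ⊢
    exact by nlinarith [mul_eq_zero.mp this]
end

section
/- In the standard form case, σ(r,n) = σ(n,r) = 1 for all r ∈ Rad(f) and n ∈ ℤ^d; consequently t^n t^r = t^{n+r} in ℂ_q. -/
open Finset

/-- σ(n,m) = ∏_{1 ≤ i < j ≤ d} q_{ji}^{n_j m_i} -/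
noncomputable def qsigma {d : ℕ} (q : Fin d → Fin d → ℂˣ) (n m : Fin d → ℤ) : ℂˣ :=
  ∏ p ∈ Finset.univ.filter (fun p : Fin d × Fin d => p.1 < p.2),
    q p.2 p.1 ^ (n p.2 * m p.1)

theorem stmt5 {d z : ℕ} (hd : 1 ≤ d) (hz : 2 * z ≤ d)
    (k : Fin z → ℕ) (hk : ∀ i, 0 < k i)
    (ζ : Fin z → ℂˣ) (hζ : ∀ i, IsPrimitiveRoot (ζ i) (k i))
    (q : Fin d → Fin d → ℂˣ)
    (h1 : ∀ i : Fin z, ∀ a b : Fin d,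
      a.val = 2 * i.val + 1 → b.val = 2 * i.val → q a b = ζ i)
    (h2 : ∀ i : Fin z, ∀ a b : Fin d,
      a.val = 2 * i.val → b.val = 2 * i.val + 1 → q a b = (ζ i)⁻¹)
    (h3 : ∀ a b : Fin d,
      (∀ i : Fin z, ¬(a.val = 2 * i.val + 1 ∧ b.val = 2 * i.val) ∧
        ¬(a.val = 2 * i.val ∧ b.val = 2 * i.val + 1)) → q a b = 1) :
    ∀ r n : Fin d → ℤ, (∀ m, qf q r m = 1) →
      qsigma q r n = 1 ∧ qsigma q n r = 1 := by
  intro r n hr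
  -- extract from the radical condition: for b fixed, ∏ a, q a b ^ r a = 1
  have col : ∀ b : Fin d, (∏ a : Fin d, q a b ^ (r a)) = 1 := by
    intro b
    have h := hr (fun j => if j = b then 1 else 0)
    rw [qf, Fintype.prod_prod_type] at h
    rw [Finset.prod_eq_single b] at h
    · simpa using h
    · intro x _ hx
      simp [hx]
    · simp
  have key : ∀ i : Fin z, ∀ (ha : 2*i.val+1 < d) (hb : 2*i.val < d),
      ζ i ^ r ⟨2*i.val+1, ha⟩ = 1 ∧ ζ i ^ r ⟨2*i.val, hb⟩ = 1 := by
    intro i ha hb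
    constructor
    · have h := col ⟨2*i.val, hb⟩
      rw [Finset.prod_eq_single (⟨2*i.val+1, ha⟩ : Fin d)] at h
      · rwa [h1 i _ _ rfl rfl] at h
      · intro y _ hy
        have hyv : y.val ≠ 2*i.val+1 := fun hv => hy (Fin.ext hv)
        rw [h3]
        · simp
        · intro j
          constructor <;> rintro ⟨hj1, hj2⟩ <;> simp at hj2 <;> omega
      · simp
    · have h := col ⟨2*i.val+1, ha⟩
      rw [Finset.prod_eq_single (⟨2*i.val, hb⟩ : Fin d)] at h
      · rw [h2 i _ _ rfl rfl, inv_zpow] at h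
        exact inv_injective (by simpa using h)
      · intro y _ hy
        have hyv : y.val ≠ 2*i.val := fun hv => hy (Fin.ext hv)
        rw [h3]
        · simp
        · intro j
          constructor <;> rintro ⟨hj1, hj2⟩ <;> simp at hj2 <;> omega
      · simp
  constructor <;>
  · rw [qsigma]
    apply Finset.prod_eq_one
    intro p hp
    rw [Finset.mem_filter] at hp
    have hlt : p.1.val < p.2.val := hp.2
    by_cases hcase : ∃ i : Fin z, p.2.val = 2*i.val+1 ∧ p.1.val = 2*i.val
    · obtain ⟨i, hi2, hi1⟩ := hcase
      have ha : 2*i.val+1 < d := hi2 ▸ p.2.isLt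
      have hb : 2*i.val < d := hi1 ▸ p.1.isLt
      have e2 : p.2 = ⟨2*i.val+1, ha⟩ := Fin.ext hi2
      have e1 : p.1 = ⟨2*i.val, hb⟩ := Fin.ext hi1
      rw [h1 i p.2 p.1 hi2 hi1, e1, e2]
      first
      | rw [zpow_mul, (key i ha hb).1, one_zpow]
      | rw [mul_comm, zpow_mul, (key i ha hb).2, one_zpow]
    · push_neg at hcase
      rw [h3]
      · simp
      · intro j
        have := hcase j
        constructor <;> rintro ⟨hj1, hj2⟩
        · exact this hj1 hj2
        · omega
end

section
/- Let L be the ℂ-vector space with basis {e_r : r ∈ G} for an abelian subgroup G of ℤ^d, and let u ∈ ℂ^d. Then the bracket [e_r, e_{r'}] = (u | r' − r) e_{r+r'} defines a Lie algebra structure on L (bilinear, alternating, satisfying the Jacobi identity), where (u|v) = ∑ u_i v_i. -/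
/-!
On the basis vectors the Jacobiator of `[e_a, e_b] = (f b - f a) e_{a+b}`, for `f` additive, is
`((f c - f b)(f b + f c - f a) + (f a - f c)(f c + f a - f b) + (f b - f a)(f a + f b - f c)) e_{a+b+c}`,
and this polynomial vanishes identically. Antisymmetry is equally visible on the basis. Both properties
then extend from the basis to all vectors, the Jacobiator being trilinear and cyclically symmetric.
-/

open Finset

/-- The pairing (u | v) = ∑ u_i v_i for u ∈ ℂ^d and v ∈ G ≤ ℤ^d. -/
noncomputable def pairCZ {d : ℕ} (u : Fin d → ℂ) (v : Fin d → ℤ) : ℂ :=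
  ∑ i, u i * (v i : ℂ)

namespace Finsupp

variable {R α : Type*} [CommRing R]

section Bracket

variable (br : (α →₀ R) →ₗ[R] (α →₀ R) →ₗ[R] (α →₀ R))

noncomputable def jacobiator (x y z : α →₀ R) : α →₀ R :=
  br x (br y z) + br y (br z x) + br z (br x y)

lemma jacobiator_cycle (x y z : α →₀ R) : jacobiator br x y z = jacobiator br y z x := by
  simp only [jacobiator]
  abel

lemma jacobiator_add_left (x x' y z : α →₀ R) :
    jacobiator br (x + x') y z = jacobiator br x y z + jacobiator br x' y z := by
  simp only [jacobiator, map_add, LinearMap.add_apply]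
  abel

lemma jacobiator_smul_left (c : R) (x y z : α →₀ R) :
    jacobiator br (c • x) y z = c • jacobiator br x y z := by
  simp only [jacobiator, map_smul, LinearMap.smul_apply, smul_add]

lemma jacobiator_eq_zero_of_single
    (h : ∀ a b c : α, jacobiator br (single a 1) (single b 1) (single c 1) = 0)
    (x y z : α →₀ R) : jacobiator br x y z = 0 := by
  have extend : ∀ y z : α →₀ R, (∀ a, jacobiator br (single a 1) y z = 0) →
      ∀ x, jacobiator br x y z = 0 := by
    intro y z hy x
    induction x using Finsupp.induction_linear with
    | zero => simp [jacobiator]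
    | add x x' hx hx' => rw [jacobiator_add_left, hx, hx', add_zero]
    | single a c => rw [← smul_single_one, jacobiator_smul_left, hy, smul_zero]
  refine extend y z (fun a => ?_) x
  rw [jacobiator_cycle]
  refine extend z _ (fun b => ?_) y
  rw [jacobiator_cycle]
  refine extend _ _ (fun c => ?_) z
  rw [jacobiator_cycle]
  exact h a b c

lemma apply_self_eq_zero_of_single
    (hanti : ∀ a b : α, br (single a 1) (single b 1) = -br (single b 1) (single a 1))
    (hdiag : ∀ a : α, br (single a 1) (single a 1) = 0) (x : α →₀ R) : br x x = 0 := by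
  have hflip : br.flip + br = 0 := by
    ext a b
    simp [hanti a b]
  have hswap (x y : α →₀ R) : br y x = -br x y :=
    eq_neg_of_add_eq_zero_left (LinearMap.congr_fun₂ hflip x y)
  induction x using Finsupp.induction_linear with
  | zero => simp
  | add x x' hx hx' =>
    simp only [map_add, LinearMap.add_apply, hx, hx', hswap x x']
    abel
  | single a c => rw [← smul_single_one, map_smul, map_smul, LinearMap.smul_apply, hdiag, smul_zero,
      smul_zero]

end Bracket

section Witt

variable [AddCommMonoid α]

def IsWittBracket (f : α →+ R) (br : (α →₀ R) →ₗ[R] (α →₀ R) →ₗ[R] (α →₀ R)) : Prop :=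
  ∀ a b : α, br (single a 1) (single b 1) = (f b - f a) • single (a + b) 1

variable {f : α →+ R} {br : (α →₀ R) →ₗ[R] (α →₀ R) →ₗ[R] (α →₀ R)}

lemma IsWittBracket.apply_self (hbr : IsWittBracket f br) (x : α →₀ R) : br x x = 0 :=
  apply_self_eq_zero_of_single br
    (fun a b => by rw [hbr, hbr, add_comm b a, ← neg_smul, neg_sub])
    (fun a => by rw [hbr, sub_self, zero_smul]) x

lemma IsWittBracket.jacobiator_eq_zero (hbr : IsWittBracket f br) (x y z : α →₀ R) :
    jacobiator br x y z = 0 := by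
  refine jacobiator_eq_zero_of_single br (fun a b c => ?_) x y z
  have hcoeff : (f c - f b) * (f (b + c) - f a) + (f a - f c) * (f (c + a) - f b)
      + (f b - f a) * (f (a + b) - f c) = 0 := by
    simp only [map_add]
    ring
  rw [jacobiator, hbr b c, hbr c a, hbr a b, map_smul, map_smul, map_smul, hbr, hbr, hbr,
    smul_smul, smul_smul, smul_smul, show b + (c + a) = a + (b + c) by abel,
    show c + (a + b) = a + (b + c) by abel, ← add_smul, ← add_smul, hcoeff, zero_smul]

end Witt

end Finsupp

lemma pairCZ_add {d : ℕ} (u : Fin d → ℂ) (v w : Fin d → ℤ) :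
    pairCZ u (v + w) = pairCZ u v + pairCZ u w := by
  simp only [pairCZ, Pi.add_apply, Int.cast_add, mul_add, Finset.sum_add_distrib]

noncomputable def pairCZHom {d : ℕ} (u : Fin d → ℂ) : (Fin d → ℤ) →+ ℂ :=
  AddMonoidHom.mk' (pairCZ u) (pairCZ_add u)

/-- On the ℂ-vector space with basis {e_r : r ∈ G}, the bracket
[e_r, e_{r'}] = (u | r' − r) e_{r+r'} is alternating and satisfies the Jacobi
identity, hence defines a Lie algebra structure. -/
theorem stmt11 {d : ℕ} (G : AddSubgroup (Fin d → ℤ)) (u : Fin d → ℂ)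
    (br : (G →₀ ℂ) →ₗ[ℂ] (G →₀ ℂ) →ₗ[ℂ] (G →₀ ℂ))
    (hbr : ∀ r r' : G,
      br (Finsupp.single r 1) (Finsupp.single r' 1)
        = pairCZ u ((r' : Fin d → ℤ) - (r : Fin d → ℤ)) • Finsupp.single (r + r') 1) :
    (∀ x, br x x = 0) ∧
    (∀ x y z, br x (br y z) + br y (br z x) + br z (br x y) = 0) := by
  have hwitt : Finsupp.IsWittBracket ((pairCZHom u).comp G.subtype) br := fun r r' => by
    rw [← map_sub]
    exact hbr r r'
  exact ⟨hwitt.apply_self, hwitt.jacobiator_eq_zero⟩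
end

section
/- Let M be a module over the Lie algebra D = Der(ℂ_q) which also carries compatible actions of t^r (r ∈ Rad(f)) making it a ZD-module, and let ℂ_q' be the span of {t^s : s ∉ Rad(f)} with its ZD-module structure. Then the subspace of ℂ_q' ⊗ M given by J = span{ ∑_{n∈I} t^n ⊗ v_n : I ⊂ ℤ^d∖Rad(f) finite, ∑_{n∈I} t^{n+γ} v_n = 0 in M for all γ ∈ Rad(f) } is invariant under the action of each D(u,r') (r' ∈ Rad(f), u ∈ ℂ^d), where D(u,r')(t^n ⊗ v) = (u|n) t^{n+r'} ⊗ v + t^n ⊗ D(u,r')v. -/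
open Finset

/-- If n ∉ Rad(f) and r ∈ Rad(f) then n + r ∉ Rad(f). -/
def radShift {d : ℕ} (Radf : AddSubgroup (Fin d → ℤ))
    (n : {n : Fin d → ℤ // n ∉ Radf}) (r : Radf) : {n : Fin d → ℤ // n ∉ Radf} :=
  ⟨n.1 + r.1, fun h => n.2 (by
    have := Radf.sub_mem h r.2
    simpa using this)⟩

/-- the subspace J ⊂ ℂ_q' ⊗ M (with ℂ_q' ⊗ M modelled as finitely
supported families (v_n)_{n ∉ Rad(f)} of elements of M, the element corresponding to
∑ t^n ⊗ v_n) is invariant under each operator D(u,r').  Here `T s` is the action of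
`t^s` on `M` and `Dop u r` is the action of `D(u,r)` on `M`; the hypothesis `hDT` is
the ZD-module compatibility `D(u,r')t^s = [D(u,r'),t^s] + t^s D(u,r')
= (u|s) t^{s+r'} + t^s D(u,r')` on `M`. -/
theorem stmt13 {d : ℕ} (hd : 1 ≤ d) (Radf : AddSubgroup (Fin d → ℤ))
    (M : Type*) [AddCommGroup M] [Module ℂ M]
    (T : (Fin d → ℤ) → (M →ₗ[ℂ] M))
    (Dop : (Fin d → ℂ) → Radf → (M →ₗ[ℂ] M))
    (hDT : ∀ (u : Fin d → ℂ) (r' : Radf) (s : Fin d → ℤ), s ∉ Radf → ∀ w : M,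
      Dop u r' (T s w) = pairCZ u s • T (s + (r' : Fin d → ℤ)) w + T s (Dop u r' w)) :
    ∀ (u : Fin d → ℂ) (r' : Radf) (v : {n : Fin d → ℤ // n ∉ Radf} →₀ M),
      (∀ γ : Radf, (v.sum fun n w => T (n.1 + (γ : Fin d → ℤ)) w) = 0) →
      (∀ γ : Radf,
        ((v.sum fun n w =>
            pairCZ u n.1 • Finsupp.single (radShift Radf n r') w
              + Finsupp.single n (Dop u r' w)).sum
          fun n w => T (n.1 + (γ : Fin d → ℤ)) w) = 0) := by
  intro u r' v hv γ
  classical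
  have hpair : ∀ (a b : Fin d → ℤ), pairCZ u (a + b) = pairCZ u a + pairCZ u b := by
    intro a b
    simp [pairCZ, mul_add, Finset.sum_add_distrib]
  set Lγ : ({n : Fin d → ℤ // n ∉ Radf} →₀ M) →ₗ[ℂ] M :=
    Finsupp.lsum ℂ (fun n => T (n.1 + (γ : Fin d → ℤ))) with hLdef
  have hLs : ∀ f : {n : Fin d → ℤ // n ∉ Radf} →₀ M,
      (f.sum fun n w => T (n.1 + (γ : Fin d → ℤ)) w) = Lγ f := fun f => rfl
  rw [hLs, map_finsuppSum]
  have step : ∀ (n : {n : Fin d → ℤ // n ∉ Radf}) (w : M),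
      Lγ (pairCZ u n.1 • Finsupp.single (radShift Radf n r') w
          + Finsupp.single n (Dop u r' w))
      = Dop u r' (T (n.1 + (γ : Fin d → ℤ)) w)
        + (-pairCZ u (γ : Fin d → ℤ)) • T (n.1 + ((γ : Fin d → ℤ) + (r' : Fin d → ℤ))) w := by
    intro n w
    have hs : (n.1 + (γ : Fin d → ℤ)) ∉ Radf := fun h => n.2 (by
      have := Radf.sub_mem h γ.2
      simpa using this)
    have h1 := hDT u r' (n.1 + (γ : Fin d → ℤ)) hs w
    have h2 : T (n.1 + (γ : Fin d → ℤ)) (Dop u r' w)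
        = Dop u r' (T (n.1 + (γ : Fin d → ℤ)) w)
          - pairCZ u (n.1 + (γ : Fin d → ℤ)) • T (n.1 + (γ : Fin d → ℤ) + (r' : Fin d → ℤ)) w := by
      rw [h1]; abel
    have hidx : (radShift Radf n r').1 + (γ : Fin d → ℤ) = n.1 + (γ : Fin d → ℤ) + (r' : Fin d → ℤ) := by
      show n.1 + (r' : Fin d → ℤ) + (γ : Fin d → ℤ) = _
      abel
    have hidx2 : n.1 + ((γ : Fin d → ℤ) + (r' : Fin d → ℤ)) = n.1 + (γ : Fin d → ℤ) + (r' : Fin d → ℤ) := by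
      abel
    simp only [hLdef, map_add, map_smul, Finsupp.lsum_single, hidx, hidx2, h2,
      hpair n.1 (γ : Fin d → ℤ)]
    module
  simp only [step]
  rw [Finsupp.sum_add]
  have e1 : (v.sum fun n w => Dop u r' (T (n.1 + (γ : Fin d → ℤ)) w)) = 0 := by
    rw [← map_finsuppSum, hv γ, map_zero]
  have e2 : (v.sum fun n w =>
      (-pairCZ u (γ : Fin d → ℤ)) • T (n.1 + ((γ : Fin d → ℤ) + (r' : Fin d → ℤ))) w) = 0 := by
    rw [← Finsupp.smul_sum]
    have h := hv (γ + r')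
    rw [show ((γ + r' : Radf) : Fin d → ℤ) = (γ : Fin d → ℤ) + (r' : Fin d → ℤ) from rfl] at h
    rw [h, smul_zero]
  rw [e1, e2, add_zero]
end
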